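/- Let A be Hurwitz, P symmetric positive definite with L L^T = -A^T P - P A for invertible L, and H ∈ ℝ^{n × n²}. If ‖x‖₂ < σ_min(L)² / (2 ‖P‖_F ‖H‖_F) and x ≠ 0, then the Lyapunov derivative x^T(A^T P + P A)x + 2 x^T P H(x ⊗ x) is negative. -/

import Mathlib

open Matrix BigOperators

noncomputable def frobNorm {m n : Type*} [Fintype m] [Fintype n] (M : Matrix m n ℝ) : ℝ :=
  Real.sqrt (∑ i, ∑ j, (M i j) ^ 2)

noncomputable def eucNorm {m : Type*} [Fintype m] (x : m → ℝ) : ℝ :=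
  Real.sqrt (∑ i, (x i) ^ 2)

def kron {n : ℕ} (x : Fin n → ℝ) : Fin n × Fin n → ℝ :=
  fun p => x p.1 * x p.2

/-! Since `L Lᵀ = -(AᵀP + PA)`, the quadratic part of the derivative is at most `-s²‖x‖²`,
while by Cauchy–Schwarz the cubic part `2 xᵀPH(x ⊗ x)` is at most `2‖P‖_F‖H‖_F‖x‖³`,
because `‖x ⊗ x‖ = ‖x‖²`. Their sum is `‖x‖² (2‖P‖_F‖H‖_F‖x‖ - s²)`, negative inside the ball. -/

section Norms

variable {m k : Type*} [Fintype m] [Fintype k]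

lemma eucNorm_nonneg (x : m → ℝ) : 0 ≤ eucNorm x := Real.sqrt_nonneg _

lemma frobNorm_nonneg (M : Matrix m k ℝ) : 0 ≤ frobNorm M := Real.sqrt_nonneg _

lemma sq_eucNorm (x : m → ℝ) : eucNorm x ^ 2 = ∑ i, x i ^ 2 :=
  Real.sq_sqrt (Finset.sum_nonneg fun _ _ => sq_nonneg _)

lemma eucNorm_pos {x : m → ℝ} (hx : x ≠ 0) : 0 < eucNorm x := by
  obtain ⟨i, hi⟩ := Function.ne_iff.1 hx
  exact Real.sqrt_pos.2 <|
    Finset.sum_pos' (fun _ _ => sq_nonneg _) ⟨i, Finset.mem_univ i, sq_pos_of_ne_zero hi⟩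

lemma abs_dotProduct_le_eucNorm_mul (x y : m → ℝ) : |x ⬝ᵥ y| ≤ eucNorm x * eucNorm y := by
  have h := Real.sqrt_le_sqrt (Finset.sum_mul_sq_le_sq_mul_sq Finset.univ x y)
  rwa [Real.sqrt_sq_eq_abs, Real.sqrt_mul (Finset.sum_nonneg fun _ _ => sq_nonneg _)] at h

lemma eucNorm_mulVec_le (M : Matrix m k ℝ) (y : k → ℝ) :
    eucNorm (M *ᵥ y) ≤ frobNorm M * eucNorm y := by
  have hrows : ∑ i, (M *ᵥ y) i ^ 2 ≤ (∑ i, ∑ j, M i j ^ 2) * ∑ j, y j ^ 2 := by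
    rw [Finset.sum_mul]
    exact Finset.sum_le_sum fun i _ => Finset.sum_mul_sq_le_sq_mul_sq Finset.univ (M i) y
  have h := Real.sqrt_le_sqrt hrows
  rwa [Real.sqrt_mul (x := ∑ i, ∑ j, M i j ^ 2)
    (Finset.sum_nonneg fun _ _ => Finset.sum_nonneg fun _ _ => sq_nonneg _)] at h

end Norms

lemma eucNorm_kron {n : ℕ} (x : Fin n → ℝ) : eucNorm (kron x) = eucNorm x ^ 2 := by
  have hsum : ∑ p : Fin n × Fin n, kron x p ^ 2 = (∑ i, x i ^ 2) ^ 2 := by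
    rw [Fintype.sum_prod_type, sq (∑ i, x i ^ 2), Finset.sum_mul_sum]
    simp [kron, mul_pow]
  rw [eucNorm, hsum, Real.sqrt_sq (Finset.sum_nonneg fun _ _ => sq_nonneg _), sq_eucNorm]

lemma abs_dotProduct_mulVec_mulVec_kron_le {n : ℕ} {k : Type*} [Fintype k]
    (P : Matrix (Fin n) k ℝ) (H : Matrix k (Fin n × Fin n) ℝ) (x : Fin n → ℝ) :
    |x ⬝ᵥ P *ᵥ H *ᵥ kron x| ≤ frobNorm P * frobNorm H * eucNorm x ^ 3 :=
  calc |x ⬝ᵥ P *ᵥ H *ᵥ kron x|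
      ≤ eucNorm x * eucNorm (P *ᵥ H *ᵥ kron x) := abs_dotProduct_le_eucNorm_mul _ _
    _ ≤ eucNorm x * (frobNorm P * (frobNorm H * eucNorm x ^ 2)) := by
        gcongr
        · exact eucNorm_nonneg x
        · exact (eucNorm_mulVec_le P _).trans <| by
            gcongr
            · exact frobNorm_nonneg P
            · exact (eucNorm_mulVec_le H _).trans_eq (by rw [eucNorm_kron])
    _ = frobNorm P * frobNorm H * eucNorm x ^ 3 := by ring

theorem lyapunov_derivative_neg_in_ball_general (n : ℕ)
    (A P L : Matrix (Fin n) (Fin n) ℝ)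
    (H : Matrix (Fin n) (Fin n × Fin n) ℝ)
    (hLyap : L * Lᵀ = -Aᵀ * P - P * A)
    (s : ℝ)
    (hsmin : ∀ y : Fin n → ℝ, s ^ 2 * (eucNorm y) ^ 2 ≤ dotProduct y ((L * Lᵀ).mulVec y))
    (x : Fin n → ℝ) (hx0 : x ≠ 0)
    (hxball : eucNorm x < s ^ 2 / (2 * frobNorm P * frobNorm H)) :
    dotProduct x ((Aᵀ * P + P * A).mulVec x)
      + 2 * dotProduct x (P.mulVec (H.mulVec (kron x))) < 0 := by
  set a := eucNorm x
  have ha : 0 < a := eucNorm_pos hx0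
  -- a zero denominator would make the ball empty, since `s ^ 2 / 0 = 0`
  have hc : 0 < 2 * frobNorm P * frobNorm H := by
    rcases div_pos_iff.1 ((eucNorm_nonneg x).trans_lt hxball) with h | h
    · exact h.2
    · nlinarith [frobNorm_nonneg P, frobNorm_nonneg H]
  have hsmall : a * (2 * frobNorm P * frobNorm H) < s ^ 2 := (lt_div_iff₀ hc).1 hxball
  have hquad : x ⬝ᵥ (Aᵀ * P + P * A) *ᵥ x ≤ -(s ^ 2 * a ^ 2) := by
    have hsum : Aᵀ * P + P * A = -(L * Lᵀ) := by rw [hLyap]; noncomm_ring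
    rw [hsum, neg_mulVec, dotProduct_neg]
    linarith [hsmin x]
  have hcubic := (le_abs_self _).trans (abs_dotProduct_mulVec_mulVec_kron_le P H x)
  nlinarith [mul_pos (pow_pos ha 2) (sub_pos.2 hsmall)]

theorem lyapunov_derivative_neg_in_ball (n : ℕ)
    (A P L : Matrix (Fin n) (Fin n) ℝ)
    (H : Matrix (Fin n) (Fin n × Fin n) ℝ)
    (hHurwitz : ∀ μ : ℂ, ((A.map Complex.ofReal).charpoly).IsRoot μ → μ.re < 0)
    (hPsymm : P.IsSymm) (hP : P.PosDef)
    (hL : IsUnit L.det)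
    (hLyap : L * Lᵀ = -Aᵀ * P - P * A)
    (s : ℝ) (hs : 0 < s)
    (hsmin : ∀ y : Fin n → ℝ, s ^ 2 * (eucNorm y) ^ 2 ≤ dotProduct y ((L * Lᵀ).mulVec y))
    (hH : H ≠ 0)
    (x : Fin n → ℝ) (hx0 : x ≠ 0)
    (hxball : eucNorm x < s ^ 2 / (2 * frobNorm P * frobNorm H)) :
    dotProduct x ((Aᵀ * P + P * A).mulVec x)
      + 2 * dotProduct x (P.mulVec (H.mulVec (kron x))) < 0 :=
  lyapunov_derivative_neg_in_ball_general n A P L H hLyap s hsmin x hx0 hxball
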